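/- For any solution x of the EigenAnt dynamics with positive initial conditions, the sum S(t) := Σ_{j=1}^n x_j(t) obeys the explicit two-sided exponential bounds, for all t ≥ 0: (β d_n)/α + (S(0) − (β d_n)/α) e^{−αt} ≤ S(t) ≤ (β d_1)/α + (S(0) − (β d_1)/α) e^{−αt}. -/

import Mathlib

open Filter MeasureTheory Set Real

/-!
Each `x i` solves the scalar linear equation `y' = c(t) y` with continuous coefficient, so it
stays positive. Hence the rate `S' = -α S + β (∑ d_i x_i) / S` has its second term, a weighted
mean of the `d_i`, between `β d_n` and `β d_1`, and Grönwall comparison with the affine equation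
`f' = -α f + b` yields both bounds.
-/

theorem le_of_hasDerivAt_le_neg_mul_add {f f' : ℝ → ℝ} {α b : ℝ} (hα : α ≠ 0)
    (hf : ∀ t, 0 ≤ t → HasDerivAt f (f' t) t) (hb : ∀ t, 0 ≤ t → f' t ≤ -α * f t + b)
    {t : ℝ} (ht : 0 ≤ t) :
    f t ≤ b / α + (f 0 - b / α) * exp (-α * t) := by
  have h := le_gronwallBound_of_liminf_deriv_right_le (f := f) (f' := f') (a := 0) (b := t)
    (fun s hs => (hf s hs.1).continuousAt.continuousWithinAt)
    (fun s hs _ hr => (hf s hs.1).hasDerivWithinAt.liminf_right_slope_le hr) le_rfl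
    (fun s hs => hb s hs.1) t ⟨ht, le_rfl⟩
  rw [gronwallBound_of_K_ne_0 (neg_ne_zero.mpr hα), sub_zero] at h
  convert h using 1
  field_simp
  ring

theorem le_of_neg_mul_add_le_hasDerivAt {f f' : ℝ → ℝ} {α b : ℝ} (hα : α ≠ 0)
    (hf : ∀ t, 0 ≤ t → HasDerivAt f (f' t) t) (hb : ∀ t, 0 ≤ t → -α * f t + b ≤ f' t)
    {t : ℝ} (ht : 0 ≤ t) :
    b / α + (f 0 - b / α) * exp (-α * t) ≤ f t := by
  have h := le_of_hasDerivAt_le_neg_mul_add (f := -f) (b := -b) hα (fun s hs => (hf s hs).neg)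
    (fun s hs => by simp only [Pi.neg_apply]; linarith [hb s hs]) ht
  simp only [Pi.neg_apply, neg_div] at h
  linarith

theorem pos_of_hasDerivAt_mul_self {y c : ℝ → ℝ} (hc : ContinuousOn c (Ici 0))
    (hy : ∀ t, 0 ≤ t → HasDerivAt y (c t * y t) t) (h0 : 0 < y 0) {t : ℝ} (ht : 0 ≤ t) :
    0 < y t := by
  -- integrating factor `exp (-∫ c)`, with `c` extended to all of `ℝ` by `c (max s 0)`
  set F : ℝ → ℝ := fun u => ∫ s in (0 : ℝ)..u, c (max s 0)
  have hF : ∀ u, HasDerivAt F (c (max u 0)) u := fun u =>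
    ((hc.comp_continuous (continuous_id.max continuous_const) fun s => le_max_right s 0)
      |>.integral_hasStrictDerivAt 0 u).hasDerivAt
  have hconst : ∀ s, 0 ≤ s → HasDerivAt (fun u => y u * exp (-F u)) 0 s := by
    intro s hs
    refine ((hy s hs).mul (hF s).neg.exp).congr_deriv ?_
    rw [max_eq_left hs]
    ring
  have h := constant_of_has_deriv_right_zero (a := 0) (b := t)
    (fun s hs => (hconst s hs.1).continuousAt.continuousWithinAt)
    (fun s hs => (hconst s hs.1).hasDerivWithinAt) t ⟨ht, le_rfl⟩
  simp only [F, intervalIntegral.integral_same, neg_zero, exp_zero, mul_one] at h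
  exact (mul_pos_iff_of_pos_right (exp_pos _)).mp (h ▸ h0)

section Drift

variable {ι : Type*} [Fintype ι] (α β : ℝ) (d x : ι → ℝ)

theorem sum_drift_eq :
    ∑ i, (-α + β * d i / ∑ j, x j) * x i = -α * ∑ j, x j + β * (∑ i, d i * x i) / ∑ j, x j := by
  rw [Finset.mul_sum, Finset.mul_sum, Finset.sum_div, ← Finset.sum_add_distrib]
  exact Finset.sum_congr rfl fun i _ => by ring

theorem sum_drift_le (hβ : 0 ≤ β) {M : ℝ} (hM : ∀ i, d i ≤ M) (hx : ∀ i, 0 ≤ x i)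
    (hS : 0 < ∑ j, x j) :
    ∑ i, (-α + β * d i / ∑ j, x j) * x i ≤ -α * ∑ j, x j + β * M := by
  have hdx : ∑ i, d i * x i ≤ M * ∑ j, x j := by
    rw [Finset.mul_sum]
    exact Finset.sum_le_sum fun i _ => mul_le_mul_of_nonneg_right (hM i) (hx i)
  rw [sum_drift_eq α β d x, add_le_add_iff_left, div_le_iff₀ hS, mul_assoc]
  exact mul_le_mul_of_nonneg_left hdx hβ

theorem le_sum_drift (hβ : 0 ≤ β) {m : ℝ} (hm : ∀ i, m ≤ d i) (hx : ∀ i, 0 ≤ x i)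
    (hS : 0 < ∑ j, x j) :
    -α * ∑ j, x j + β * m ≤ ∑ i, (-α + β * d i / ∑ j, x j) * x i := by
  have hdx : m * ∑ j, x j ≤ ∑ i, d i * x i := by
    rw [Finset.mul_sum]
    exact Finset.sum_le_sum fun i _ => mul_le_mul_of_nonneg_right (hm i) (hx i)
  rw [sum_drift_eq α β d x, add_le_add_iff_left, le_div_iff₀ hS, mul_assoc]
  exact mul_le_mul_of_nonneg_left hdx hβ

end Drift

theorem stmt3
    (n : ℕ) (hn : 0 < n) (α β : ℝ) (hα : 0 < α) (hβ : 0 < β)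
    (d : Fin n → ℝ) (hd : ∀ i j : Fin n, i ≤ j → d j ≤ d i)
    (x : ℝ → Fin n → ℝ)
    (hS : ∀ t : ℝ, 0 ≤ t → (∑ j, x t j) ≠ 0)
    (hode : ∀ (i : Fin n) (t : ℝ), 0 ≤ t →
      HasDerivAt (fun s => x s i) ((-α + β * d i / (∑ j, x t j)) * x t i) t)
    (hx0 : ∀ i, 0 < x 0 i)
    :
    ∀ t : ℝ, 0 ≤ t →
      β * d ⟨n - 1, by omega⟩ / α + ((∑ j, x 0 j) - β * d ⟨n - 1, by omega⟩ / α) * Real.exp (-α * t)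
        ≤ ∑ j, x t j ∧
      ∑ j, x t j ≤
        β * d ⟨0, hn⟩ / α + ((∑ j, x 0 j) - β * d ⟨0, hn⟩ / α) * Real.exp (-α * t) := by
  intro t ht
  have hSd : ∀ s, 0 ≤ s → HasDerivAt (fun s => ∑ j, x s j)
      (∑ i, (-α + β * d i / ∑ j, x s j) * x s i) s :=
    fun s hs => HasDerivAt.fun_sum fun i _ => hode i s hs
  have hxpos : ∀ s, 0 ≤ s → ∀ i, 0 < x s i := fun s hs i =>
    pos_of_hasDerivAt_mul_self (continuousOn_const.add (continuousOn_const.div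
      (fun r hr => (hSd r hr).continuousAt.continuousWithinAt) hS)) (hode i) (hx0 i) hs
  have hSpos : ∀ s, 0 ≤ s → 0 < ∑ j, x s j := fun s hs =>
    Finset.sum_pos (fun i _ => hxpos s hs i) ⟨⟨0, hn⟩, Finset.mem_univ _⟩
  have hd_first : ∀ i, d i ≤ d ⟨0, hn⟩ := fun i => hd _ i (Nat.zero_le _)
  have hd_last : ∀ i, d ⟨n - 1, by omega⟩ ≤ d i := fun i => hd i _ (Nat.le_sub_one_of_lt i.isLt)
  exact ⟨le_of_neg_mul_add_le_hasDerivAt hα.ne' hSd (fun s hs =>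
      le_sum_drift α β d (x s) hβ.le hd_last (fun i => (hxpos s hs i).le) (hSpos s hs)) ht,
    le_of_hasDerivAt_le_neg_mul_add hα.ne' hSd (fun s hs =>
      sum_drift_le α β d (x s) hβ.le hd_first (fun i => (hxpos s hs i).le) (hSpos s hs)) ht⟩
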